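/- For h, k coprime with k even and hh' ≡ −1 (mod 16k), the root-of-unity identity ω_{h,k/2}² / ω_{h,k}⁴ = (−1)^{k/2} · e^{(πi h'/2)(1 − 3k/2)} holds when gcd(4,k) = 2. -/

import Mathlib

/-- The eta multiplier `ω_{h,k}` for `k` odd:
`ω_{h,k} = (−h/k) e^{−πi((k−1)/4 + (1/12)(k − 1/k)(2h − h' + h²h'))}`. -/
noncomputable def omegaKodd (h k h' : ℤ) : ℂ :=
  (jacobiSym (-h) k.toNat : ℂ) *
    Complex.exp (-(Real.pi : ℂ) * Complex.I *
      (((k : ℂ) - 1) / 4 +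
        1 / 12 * ((k : ℂ) - 1 / (k : ℂ)) * (2 * (h : ℂ) - (h' : ℂ) + (h : ℂ) ^ 2 * (h' : ℂ))))

/-- The eta multiplier `ω_{h,k}` for `h` odd:
`ω_{h,k} = (−k/h) e^{−πi((2−hk−h)/4 + (1/12)(k − 1/k)(2h − h' + h²h'))}`. -/
noncomputable def omegaHodd (h k h' : ℤ) : ℂ :=
  (jacobiSym (-k) h.toNat : ℂ) *
    Complex.exp (-(Real.pi : ℂ) * Complex.I *
      (((2 : ℂ) - (h : ℂ) * (k : ℂ) - (h : ℂ)) / 4 +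
        1 / 12 * ((k : ℂ) - 1 / (k : ℂ)) * (2 * (h : ℂ) - (h' : ℂ) + (h : ℂ) ^ 2 * (h' : ℂ))))

/-- The eta multiplier `ω_{h,k}` (using the `k` odd branch when `k` is odd, and the
`h` odd branch otherwise; here `h'` satisfies `hh' ≡ −1` modulo a suitable multiple of `k`). -/
noncomputable def omegaEta (h k h' : ℤ) : ℂ :=
  if k % 2 = 1 then omegaKodd h k h' else omegaHodd h k h'

/-!
The Jacobi symbols are `±1`, so they disappear from `ω_{h,k/2}²` and `ω_{h,k}⁴`. Writing `k = 2m`,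
the terms in `1/m` of the two exponents cancel, and the ratio becomes `exp(πi N / 2) = iᴺ` for an
integer `N`. The right-hand side is also a power of `i`, and the two exponents agree modulo `4`
because `h` and `m` are odd and `hh' ≡ −1 (mod 4)`.
-/

open Complex
open scoped Real

lemma jacobiSym_toNat_sq {a b : ℤ} (hab : IsCoprime a b) : jacobiSym a b.toNat ^ 2 = 1 := by
  rcases le_or_gt 0 b with hb | hb
  · apply jacobiSym.sq_one
    rw [Int.toNat_of_nonneg hb]
    exact Int.isCoprime_iff_gcd_eq_one.mp hab
  · rw [Int.toNat_of_nonpos hb.le, jacobiSym.zero_right, one_pow]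

lemma Complex.exp_pi_div_two_mul_I_mul_intCast (n : ℤ) : exp (π / 2 * I * n) = I ^ n := by
  rw [mul_comm, exp_int_mul, exp_pi_div_two_mul_I]

lemma Complex.I_zpow_eq_of_modEq {a b : ℤ} (hab : a ≡ b [ZMOD 4]) : I ^ a = I ^ b := by
  obtain ⟨q, hq⟩ := hab.dvd
  rw [show b = a + 4 * q by omega, zpow_add₀ I_ne_zero, zpow_mul]
  norm_num

lemma omegaKodd_sq_div_omegaHodd_pow_four {h m : ℤ} (h' : ℤ) (hcop : IsCoprime h (2 * m))
    (hm : m ≠ 0) :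
    omegaKodd h m h' ^ 2 / omegaHodd h (2 * m) h' ^ 4
      = I ^ (5 - m - 2 * h * m - 2 * h - h' * m + h ^ 2 * h' * m) := by
  have hJm : ((jacobiSym (-h) m.toNat : ℤ) : ℂ) ^ 2 = 1 := by
    rw [← Int.cast_pow, jacobiSym_toNat_sq (hcop.of_mul_right_right.neg_left), Int.cast_one]
  have hJ2m : ((jacobiSym (-(2 * m)) h.toNat : ℤ) : ℂ) ^ 4 = 1 := by
    rw [← Int.cast_pow, show 4 = 2 * 2 from rfl, pow_mul, jacobiSym_toNat_sq hcop.symm.neg_left,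
      one_pow, Int.cast_one]
  rw [omegaKodd, omegaHodd, mul_pow, mul_pow, hJm, hJ2m, one_mul, one_mul, ← exp_nat_mul,
    ← exp_nat_mul, ← exp_sub, ← exp_pi_div_two_mul_I_mul_intCast]
  congr 1
  have hmC : (m : ℂ) ≠ 0 := Int.cast_ne_zero.mpr hm
  field_simp
  push_cast
  ring

lemma phase_exponents_modEq {h h' m : ℤ} (hinv : h * h' ≡ -1 [ZMOD 4]) (hm : Odd m) :
    5 - m - 2 * h * m - 2 * h - h' * m + h ^ 2 * h' * m ≡ 2 * m + h' * (1 - 3 * m) [ZMOD 4] := by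
  have hm2 : m ^ 2 ≡ 1 [ZMOD 4] := Int.sq_mod_four_eq_one_of_odd hm
  have hinv4 := (ZMod.intCast_eq_intCast_iff _ _ 4).mpr hinv
  have hm4 := (ZMod.intCast_eq_intCast_iff _ _ 4).mpr hm2
  refine (ZMod.intCast_eq_intCast_iff _ _ 4).mp ?_
  push_cast at hinv4 hm4 ⊢
  generalize (h : ZMod 4) = x, (h' : ZMod 4) = y, (m : ZMod 4) = z at hinv4 hm4 ⊢
  revert x y z
  decide

theorem omega_ratio_identity_general (h k h' : ℤ)
    (hcop : IsCoprime h k) (hk4 : k % 4 = 2) (hcong : h * h' ≡ -1 [ZMOD 16 * k]) :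
    (omegaEta h (k / 2) h') ^ 2 / (omegaEta h k h') ^ 4
      = (-1 : ℂ) ^ (k / 2) * Complex.exp ((Real.pi : ℂ) * Complex.I * (h' : ℂ) / 2
          * (1 - 3 * (k : ℂ) / 2)) := by
  obtain ⟨m, rfl, hm⟩ : ∃ m, k = 2 * m ∧ m % 2 = 1 := ⟨k / 2, by omega, by omega⟩
  have hinv : h * h' ≡ -1 [ZMOD 4] := hcong.of_dvd ⟨8 * m, by ring⟩
  rw [Int.mul_ediv_cancel_left m two_ne_zero, omegaEta, omegaEta, if_pos hm, if_neg (by omega),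
    omegaKodd_sq_div_omegaHodd_pow_four h' hcop (by omega),
    I_zpow_eq_of_modEq (phase_exponents_modEq hinv (Int.odd_iff.mpr hm)), zpow_add₀ I_ne_zero,
    zpow_mul, zpow_two, I_mul_I, ← exp_pi_div_two_mul_I_mul_intCast]
  congr 2
  push_cast
  ring

/-- For `gcd(h,k)=1`, `k ≡ 2 (mod 4)` and `hh' ≡ −1 (mod 16k)`, the root-of-unity identity
`ω_{h,k/2}²/ω_{h,k}⁴ = (−1)^{k/2} e^{(πi h'/2)(1 − 3k/2)}`. -/
theorem omega_ratio_identity (h k h' : ℤ) (hh0 : 0 ≤ h) (hhk : h < k)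
    (hcop : IsCoprime h k) (hk4 : k % 4 = 2) (hcong : h * h' ≡ -1 [ZMOD 16 * k]) :
    (omegaEta h (k / 2) h') ^ 2 / (omegaEta h k h') ^ 4
      = (-1 : ℂ) ^ (k / 2) * Complex.exp ((Real.pi : ℂ) * Complex.I * (h' : ℂ) / 2
          * (1 - 3 * (k : ℂ) / 2)) :=
  omega_ratio_identity_general h k h' hcop hk4 hcong
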